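/- arXiv:1302.2986 — 9 statements merged into one kernel-verified Lean document; each statement's English description precedes it below -/
import Mathlib

section
/- B_r is the unique (up to isomorphism) r-regular bipartite totally silver graph of order 2r+2. -/
/-- A totally silver coloring: each of the `k` colors appears exactly once on every
closed neighborhood `N[v]`. -/
def IsTotallySilver {V : Type*} {k : ℕ} (G : SimpleGraph V) (c : V → Fin k) : Prop :=
  ∀ v : V, ∀ i : Fin k, ∃! w : V, (w = v ∨ G.Adj v w) ∧ c w = i

/-- The graph \`B r\`: \`K_{r+1,r+1}\` minus a perfect matching. \`x i = Sum.inl i\` is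
adjacent to \`y j = Sum.inr j\` iff \`i ≠ j\`. -/
def B (r : ℕ) : SimpleGraph (Fin (r + 1) ⊕ Fin (r + 1)) where
  Adj u v := Sum.elim id id u ≠ Sum.elim id id v ∧ u.isLeft ≠ v.isLeft
  symm := ⟨fun u v h => ⟨h.1.symm, h.2.symm⟩⟩
  loopless := ⟨fun u h => h.2 rfl⟩

instance (r : ℕ) : DecidableRel (B r).Adj := fun u v =>
  inferInstanceAs (Decidable (Sum.elim id id u ≠ Sum.elim id id v ∧ u.isLeft ≠ v.isLeft))

/-!
Every closed neighbourhood carries each of the `r + 1` colours exactly once, so it has `r + 1`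
vertices. Two vertices `a ≠ b` of the same colour (they exist by pigeonhole) have disjoint closed
neighbourhoods, which therefore partition the `2r + 2` vertices. In a triangle-free graph this
makes `{a} ∪ N(b)` and `{b} ∪ N(a)` the two sides of a bipartition on each of which every colour
occurs once, and a vertex is adjacent exactly to the vertices of the other side and of another
colour: this is `B r`.
-/

open Set

namespace SimpleGraph

variable {V : Type*} (G : SimpleGraph V)

def closedNbhd (v : V) : Set V := insert v (G.neighborSet v)

variable {G}

theorem mem_closedNbhd {v w : V} : w ∈ G.closedNbhd v ↔ w = v ∨ G.Adj v w := Iff.rfl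

theorem mem_closedNbhd_comm {v w : V} : w ∈ G.closedNbhd v ↔ v ∈ G.closedNbhd w := by
  simp only [mem_closedNbhd, eq_comm, G.adj_comm]

end SimpleGraph

open SimpleGraph

namespace IsTotallySilver

variable {V : Type*} {G : SimpleGraph V}

section

variable {k : ℕ} {c : V → Fin k}

theorem bijOn (hs : IsTotallySilver G c) (v : V) : BijOn c (G.closedNbhd v) univ :=
  ⟨fun _ _ => mem_univ _,
    fun _ hx _ hy hxy => (hs v _).unique ⟨hx, rfl⟩ ⟨hy, hxy.symm⟩,
    fun i _ => (hs v i).exists⟩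

theorem ne_of_adj (hs : IsTotallySilver G c) {u v : V} (huv : G.Adj u v) : c u ≠ c v :=
  fun hc => G.ne_of_adj huv <| (hs.bijOn u).injOn (Or.inl rfl) (Or.inr huv) hc

theorem exists_adj_of_ne (hs : IsTotallySilver G c) {v : V} {i : Fin k} (h : c v ≠ i) :
    ∃ w, G.Adj v w ∧ c w = i := by
  obtain ⟨w, ⟨rfl | hvw, hw⟩, -⟩ := hs v i
  · exact absurd hw h
  · exact ⟨w, hvw, hw⟩

theorem ncard_closedNbhd [Finite V] (hs : IsTotallySilver G c) (v : V) :
    (G.closedNbhd v).ncard = k := by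
  rw [(hs.bijOn v).ncard_eq, ncard_univ, Nat.card_eq_fintype_card, Fintype.card_fin]

theorem disjoint_closedNbhd (hs : IsTotallySilver G c) {u v : V} (huv : u ≠ v)
    (hc : c u = c v) : Disjoint (G.closedNbhd u) (G.closedNbhd v) :=
  disjoint_left.2 fun _ hu hv =>
    huv <| (hs.bijOn _).injOn (mem_closedNbhd_comm.1 hu) (mem_closedNbhd_comm.1 hv) hc

theorem mem_closedNbhd_iff_notMem [Finite V] (hs : IsTotallySilver G c)
    (hcard : Nat.card V = 2 * k) {u v : V} (huv : u ≠ v) (hc : c u = c v) (w : V) :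
    w ∈ G.closedNbhd u ↔ w ∉ G.closedNbhd v := by
  have hdisj := hs.disjoint_closedNbhd huv hc
  have hunion : G.closedNbhd u ∪ G.closedNbhd v = univ := by
    rw [eq_univ_iff_ncard, ncard_union_eq hdisj, hs.ncard_closedNbhd, hs.ncard_closedNbhd,
      hcard, two_mul]
  refine ⟨fun hwu hwv => disjoint_left.1 hdisj hwu hwv, fun hwv => ?_⟩
  have hw : w ∈ G.closedNbhd u ∪ G.closedNbhd v := hunion ▸ mem_univ w
  exact hw.resolve_right hwv

theorem side_iff_not_side_of_adj [Finite V] {a b u v : V} (hs : IsTotallySilver G c)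
    (hcard : Nat.card V = 2 * k) (htri : G.CliqueFree 3) (hab : a ≠ b) (hc : c a = c b)
    (huv : G.Adj u v) :
    (u = a ∨ G.Adj b u) ↔ ¬ (v = a ∨ G.Adj b v) := by
  classical
  have hN := hs.mem_closedNbhd_iff_notMem hcard hab hc
  have hNu := hN u
  have hNv := hN v
  have ht : ∀ x, ¬ (G.Adj x u ∧ G.Adj x v) := fun x ⟨hxu, hxv⟩ =>
    htri {x, u, v} (is3Clique_triple_iff.2 ⟨hxu, hxv, huv⟩)
  simp only [mem_closedNbhd] at hNu hNv
  -- two vertices on the same side would have the common neighbour `a` or `b`,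
  -- or one of them would lie in both `N[a]` and `N[b]`
  grind [SimpleGraph.adj_comm, SimpleGraph.irrefl]

theorem eq_of_side_iff_side [Finite V] {a b u v : V} (hs : IsTotallySilver G c)
    (hcard : Nat.card V = 2 * k) (hab : a ≠ b) (hc : c a = c b) (hcuv : c u = c v)
    (hside : (u = a ∨ G.Adj b u) ↔ (v = a ∨ G.Adj b v)) : u = v := by
  by_contra huv
  have hN := hs.mem_closedNbhd_iff_notMem hcard hab hc
  have hNu := hN u
  have hNv := hN v
  have hNa := hs.mem_closedNbhd_iff_notMem hcard huv hcuv a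
  simp only [mem_closedNbhd] at hNu hNv hNa
  have hproper := @hs.ne_of_adj
  -- `a` lies in exactly one of `N[u]`, `N[v]`; either way one of `u`, `v` is adjacent to the
  -- vertex of its own colour among `a`, `b`
  grind [SimpleGraph.adj_comm, SimpleGraph.irrefl]

end

theorem nonempty_iso_B [Finite V] {r : ℕ} {c : V → Fin (r + 1)} (hs : IsTotallySilver G c)
    (hcard : Nat.card V = 2 * (r + 1)) (s : V → Prop) [DecidablePred s]
    (hs_adj : ∀ ⦃u v⦄, G.Adj u v → (s u ↔ ¬ s v))
    (hs_inj : ∀ ⦃u v⦄, c u = c v → (s u ↔ s v) → u = v) : Nonempty (G ≃g B r) := by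
  let f (v : V) : Fin (r + 1) ⊕ Fin (r + 1) := if s v then .inl (c v) else .inr (c v)
  have hf : ∀ u v, (B r).Adj (f u) (f v) ↔ c u ≠ c v ∧ (s u ↔ ¬ s v) := by
    intro u v
    simp only [f, B]
    split_ifs <;> simp_all
  have hinj : f.Injective := by
    intro u v h
    simp only [f] at h
    split_ifs at h <;> simp only [Sum.inl.injEq, Sum.inr.injEq] at h <;>
      exact hs_inj h (by tauto)
  have hbij : f.Bijective := hinj.bijective_of_nat_card_le (by simp [hcard]; omega)
  refine ⟨⟨Equiv.ofBijective f hbij, fun {u v} => ?_⟩⟩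
  change (B r).Adj (f u) (f v) ↔ G.Adj u v
  refine (hf u v).trans ⟨fun ⟨hc, hsuv⟩ => ?_, fun h => ⟨hs.ne_of_adj h, hs_adj h⟩⟩
  obtain ⟨w, huw, hw⟩ := hs.exists_adj_of_ne hc
  have hsw := hs_adj huw
  rwa [hs_inj hw (by tauto)] at huw

end IsTotallySilver

theorem stmt_6_general (r : ℕ) {V : Type*} [Fintype V]
    (G : SimpleGraph V)
    (hcard : Fintype.card V = 2 * r + 2)
    (hbip : G.Colorable 2)
    (hsilver : ∃ c : V → Fin (r + 1), IsTotallySilver G c) :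
    Nonempty (G ≃g B r) := by
  classical
  obtain ⟨c, hs⟩ := hsilver
  have hcard' : Nat.card V = 2 * (r + 1) := by rw [Nat.card_eq_fintype_card, hcard, mul_add_one]
  obtain ⟨a, b, hab, hc⟩ := Fintype.exists_ne_map_eq_of_card_lt c (by simp [hcard]; omega)
  have htri : G.CliqueFree 3 := hbip.cliqueFree (by norm_num)
  exact hs.nonempty_iso_B hcard' (fun v => v = a ∨ G.Adj b v)
    (fun _ _ => hs.side_iff_not_side_of_adj hcard' htri hab hc)
    (fun _ _ => hs.eq_of_side_iff_side hcard' hab hc)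

theorem stmt_6 (r : ℕ) (hr : 1 ≤ r) {V : Type*} [Fintype V]
    (G : SimpleGraph V) [DecidableRel G.Adj]
    (hcard : Fintype.card V = 2 * r + 2)
    (hreg : G.IsRegularOfDegree r)
    (hbip : G.Colorable 2)
    (hsilver : ∃ c : V → Fin (r + 1), IsTotallySilver G c) :
    Nonempty (G ≃g B r) :=
  stmt_6_general r G hcard hbip hsilver
end

section
/- Let G be an r-regular totally silver graph with totally silver color classes C_0,...,C_r, and let C_{r+1} be a new set of vertices disjoint from V(G) with |C_{r+1}| = |C_0|. Then the graph H obtained from G by adding the vertices of C_{r+1} and adding a perfect matching between C_{r+1} and each C_i (i = 0,...,r) is (r+1)-regular and totally silver. -/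
namespace Sum

variable {α β : Type*} {p : α ⊕ β → Prop}

theorem existsUnique_of_inl (h : ∃! a, p (inl a)) (hr : ∀ b, ¬ p (inr b)) : ∃! x, p x := by
  obtain ⟨a, ha, huniq⟩ := h
  exact ⟨inl a, ha, fun | inl a', h' => congrArg inl (huniq a' h') | inr b, h' => (hr b h').elim⟩

theorem existsUnique_of_inr (h : ∃! b, p (inr b)) (hl : ∀ a, ¬ p (inl a)) : ∃! x, p x := by
  obtain ⟨b, hb, huniq⟩ := h
  exact ⟨inr b, hb, fun | inl a, h' => (hl a h').elim | inr b', h' => congrArg inr (huniq b' h')⟩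

end Sum

namespace SimpleGraph

variable {V W : Type*}

/-- `G` with one new vertex `w` for each fibre `f ⁻¹' {w}`, adjacent to exactly that fibre. -/
def extendByFibers (G : SimpleGraph V) (f : V → W) : SimpleGraph (V ⊕ W) where
  Adj
    | .inl u, .inl v => G.Adj u v
    | .inl v, .inr w | .inr w, .inl v => f v = w
    | .inr _, .inr _ => False
  symm := ⟨by
    rintro (u | w) (v | w') h
    exacts [h.symm, h, h, h]⟩
  loopless := ⟨by
    rintro (v | w) h
    exacts [G.loopless.irrefl v h, h]⟩

variable (G : SimpleGraph V) (f : V → W)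

@[simp] theorem extendByFibers_adj_inl_inl (u v : V) :
    (G.extendByFibers f).Adj (.inl u) (.inl v) ↔ G.Adj u v := Iff.rfl
@[simp] theorem extendByFibers_adj_inl_inr (v : V) (w : W) :
    (G.extendByFibers f).Adj (.inl v) (.inr w) ↔ f v = w := Iff.rfl
@[simp] theorem extendByFibers_adj_inr_inl (w : W) (v : V) :
    (G.extendByFibers f).Adj (.inr w) (.inl v) ↔ f v = w := Iff.rfl
@[simp] theorem extendByFibers_not_adj_inr_inr (w w' : W) :
    ¬ (G.extendByFibers f).Adj (.inr w) (.inr w') := id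

end SimpleGraph

namespace IsTotallySilver

variable {V : Type*} {k : ℕ} {G : SimpleGraph V}

noncomputable def closedNbhdEquiv {c : V → Fin k} (hc : IsTotallySilver G c) (v : V) :
    {w | w = v ∨ G.Adj v w} ≃ Fin k :=
  Equiv.ofBijective (fun w => c w)
    ⟨fun a b hab => Subtype.ext ((hc v (c a)).unique ⟨a.2, rfl⟩ ⟨b.2, hab.symm⟩),
     fun i => let ⟨w, hw, _⟩ := hc v i; ⟨⟨w, hw.1⟩, hw.2⟩⟩

theorem ncard_neighborSet {c : V → Fin (k + 1)} (hc : IsTotallySilver G c) (v : V) :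
    (G.neighborSet v).ncard = k := by
  have hclosed : {w | w = v ∨ G.Adj v w} = insert v (G.neighborSet v) := rfl
  have hfin : (G.neighborSet v).Finite :=
    (Set.finite_coe_iff.mp (Finite.of_equiv _ (hc.closedNbhdEquiv v).symm)).subset
      fun w hw => Or.inr hw
  have hcard : (insert v (G.neighborSet v)).ncard = k + 1 := by
    rw [← hclosed, ← Nat.card_coe_set_eq, Nat.card_congr (hc.closedNbhdEquiv v), Nat.card_fin]
  rwa [Set.ncard_insert_of_notMem G.notMem_neighborSet_self hfin, Nat.add_right_cancel_iff]
    at hcard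

theorem extendByFibers {W : Type*} {c : V → Fin k} (hc : IsTotallySilver G c) {f : V → W}
    (hf : ∀ w i, ∃! v, c v = i ∧ f v = w) :
    IsTotallySilver (G.extendByFibers f) (Sum.elim (Fin.castSucc ∘ c) fun _ => Fin.last k) := by
  have hne (j : Fin k) : Fin.last k ≠ j.castSucc := (Fin.castSucc_lt_last j).ne'
  rintro (v | w) i <;> rcases Fin.eq_castSucc_or_eq_last i with ⟨j, rfl⟩ | rfl
  · refine Sum.existsUnique_of_inl ?_ (by simp [hne])
    simpa using hc v j
  · refine Sum.existsUnique_of_inr ?_ (by simp [(hne _).symm])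
    simp
  · refine Sum.existsUnique_of_inl ?_ (by simp [hne])
    simpa [and_comm] using hf w j
  · refine Sum.existsUnique_of_inr ?_ (by simp [(hne _).symm])
    simp

end IsTotallySilver

section ColorClassPartner

variable {V W : Type*} {k : ℕ} {c : V → Fin k} (e : (i : Fin k) → W ≃ {v : V // c v = i})

/-- `e i` encodes the perfect matching between the new class `W` and colour class `i`; this is the
vertex of `W` matched to `v`. -/
def colorClassPartner (v : V) : W := (e (c v)).symm ⟨v, rfl⟩

theorem colorClassPartner_coe_apply (i : Fin k) (w : W) : colorClassPartner e (e i w) = w := by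
  obtain ⟨v, rfl⟩ := (e i).symm.surjective w
  obtain ⟨v, rfl⟩ := v
  rw [Equiv.apply_symm_apply]
  rfl

theorem colorClassPartner_eq_iff (v : V) (w : W) :
    colorClassPartner e v = w ↔ ∃ i, v = e i w := by
  constructor
  · rintro rfl
    exact ⟨c v, congrArg Subtype.val ((e (c v)).apply_symm_apply ⟨v, rfl⟩).symm⟩
  · rintro ⟨i, rfl⟩
    exact colorClassPartner_coe_apply e i w

theorem existsUnique_colorClassPartner_eq (w : W) (i : Fin k) :
    ∃! v, c v = i ∧ colorClassPartner e v = w := by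
  refine ⟨e i w, ⟨(e i w).2, colorClassPartner_coe_apply e i w⟩, ?_⟩
  rintro v ⟨rfl, rfl⟩
  exact congrArg Subtype.val ((e (c v)).apply_symm_apply ⟨v, rfl⟩).symm

end ColorClassPartner

theorem stmt_8_general {V W : Type*} (G : SimpleGraph V) (r : ℕ)
    (c : V → Fin (r + 1)) (hc : IsTotallySilver G c)
    (e : (i : Fin (r + 1)) → W ≃ {v : V // c v = i}) :
    let H : SimpleGraph (V ⊕ W) := SimpleGraph.fromRel (fun a b =>
      (∃ u v : V, a = Sum.inl u ∧ b = Sum.inl v ∧ G.Adj u v) ∨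
      (∃ (i : Fin (r + 1)) (w : W), a = Sum.inl ((e i w : {v : V // c v = i}) : V) ∧ b = Sum.inr w))
    (∀ x, (H.neighborSet x).ncard = r + 1) ∧
    ∃ c' : V ⊕ W → Fin (r + 2), IsTotallySilver H c' := by
  intro H
  have hH : H = G.extendByFibers (colorClassPartner e) := by
    ext (u | w) (v | w')
    · simpa [H, G.adj_comm v u] using G.ne_of_adj
    · simp [H, colorClassPartner_eq_iff]
    · simp [H, colorClassPartner_eq_iff]
    · simp [H]
  have hsilver := hc.extendByFibers (existsUnique_colorClassPartner_eq e)
  rw [hH]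
  exact ⟨hsilver.ncard_neighborSet, _, hsilver⟩

theorem stmt_8 {V W : Type*} (G : SimpleGraph V) (r : ℕ)
    (hreg : ∀ v, (G.neighborSet v).ncard = r)
    (c : V → Fin (r + 1)) (hc : IsTotallySilver G c)
    (e : (i : Fin (r + 1)) → W ≃ {v : V // c v = i}) :
    let H : SimpleGraph (V ⊕ W) := SimpleGraph.fromRel (fun a b =>
      (∃ u v : V, a = Sum.inl u ∧ b = Sum.inl v ∧ G.Adj u v) ∨
      (∃ (i : Fin (r + 1)) (w : W), a = Sum.inl ((e i w : {v : V // c v = i}) : V) ∧ b = Sum.inr w))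
    (∀ x, (H.neighborSet x).ncard = r + 1) ∧
    ∃ c' : V ⊕ W → Fin (r + 2), IsTotallySilver H c' :=
  stmt_8_general G r c hc e
end

section
/- Let G be a triangle-free cubic totally silver graph containing a 4-cycle x_1x_2x_3x_4x_1, with |V(G)| > 4. Then each x_i has a unique neighbor y_i outside the cycle, the y_i are pairwise distinct, and in any totally silver coloring c one has c(y_1) = c(x_3), c(y_2) = c(x_4), c(y_3) = c(x_1), c(y_4) = c(x_2). -/
section

variable {V : Type*} {G : SimpleGraph V}

theorem IsTotallySilver.injOn_closedNbhd {k : ℕ} {c : V → Fin k} (hc : IsTotallySilver G c)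
    (w : V) : Set.InjOn c {u | u = w ∨ G.Adj w u} := by
  intro u hu v hv huv
  obtain ⟨z, -, hz⟩ := hc w (c v)
  exact (hz u ⟨hu, huv⟩).trans (hz v ⟨hv, rfl⟩).symm

theorem SimpleGraph.existsUnique_adj_ne_ne_of_degree_eq_three {v a b : V}
    [Fintype (G.neighborSet v)] (hv : G.degree v = 3) (ha : G.Adj v a) (hb : G.Adj v b)
    (hab : a ≠ b) : ∃! w, G.Adj v w ∧ w ≠ a ∧ w ≠ b := by
  classical
  have hsub : ({a, b} : Finset V) ⊆ G.neighborFinset v := by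
    simp [Finset.insert_subset_iff, ha, hb]
  have hcard : (G.neighborFinset v \ {a, b}).card = 1 := by
    rw [Finset.card_sdiff_of_subset hsub, G.card_neighborFinset_eq_degree, hv,
      Finset.card_pair hab]
  obtain ⟨w, hw⟩ := Finset.card_eq_one.1 hcard
  have hmem : ∀ u, u ∈ G.neighborFinset v \ {a, b} ↔ G.Adj v u ∧ u ≠ a ∧ u ≠ b := by
    simp
  refine ⟨w, (hmem w).1 (by simp [hw]), fun u hu => ?_⟩
  simpa [hw] using (hmem u).2 hu

theorem Fin.four_eq_of_ne {a b c d e : Fin 4} (hab : a ≠ b) (hac : a ≠ c) (hbc : b ≠ c)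
    (hda : d ≠ a) (hdb : d ≠ b) (hdc : d ≠ c) (hea : e ≠ a) (heb : e ≠ b) (hec : e ≠ c) :
    d = e := by
  revert a b c d e; decide

namespace SimpleGraph

variable {x : Fin 4 → V} (hcyc : ∀ i, G.Adj (x i) (x (i + 1)))
include hcyc

theorem adj_add_three_of_cycle4 (i : Fin 4) : G.Adj (x i) (x (i + 3)) := by
  simpa [add_assoc] using (hcyc (i + 3)).symm

theorem not_adj_add_two_of_cycle4 (htf : ¬ ∃ a b d : V, G.Adj a b ∧ G.Adj b d ∧ G.Adj a d)
    (i : Fin 4) : ¬ G.Adj (x i) (x (i + 2)) := fun h =>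
  htf ⟨x i, x (i + 1), x (i + 2), hcyc i, by simpa [add_assoc] using hcyc (i + 1), h⟩

theorem exists_closedNbhd_pair_of_cycle4 (i j : Fin 4) :
    ∃ k, (x i = x k ∨ G.Adj (x k) (x i)) ∧ (x j = x k ∨ G.Adj (x k) (x j)) := by
  obtain ⟨d, rfl⟩ : ∃ d, j = i + d := ⟨j - i, by abel⟩
  fin_cases d
  · exact ⟨i, .inl rfl, .inl (by simp)⟩
  · exact ⟨i, .inl rfl, .inr (hcyc i)⟩
  · refine ⟨i + 1, .inr (hcyc i).symm, .inr ?_⟩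
    simpa [add_assoc] using hcyc (i + 1)
  · exact ⟨i, .inl rfl, .inr (adj_add_three_of_cycle4 hcyc i)⟩

theorem injective_comp_of_cycle4 {c : V → Fin 4} (hc : IsTotallySilver G c)
    (hinj : Function.Injective x) : Function.Injective (c ∘ x) := by
  intro i j hij
  obtain ⟨k, hi, hj⟩ := exists_closedNbhd_pair_of_cycle4 hcyc i j
  exact hinj (hc.injOn_closedNbhd (x k) hi hj hij)

theorem existsUnique_adj_off_cycle4 [Fintype V] [DecidableRel G.Adj]
    (hreg : G.IsRegularOfDegree 3) (htf : ¬ ∃ a b d : V, G.Adj a b ∧ G.Adj b d ∧ G.Adj a d)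
    (hinj : Function.Injective x) (i : Fin 4) : ∃! w, G.Adj (x i) w ∧ ∀ j, w ≠ x j := by
  have hoff : ∀ w, G.Adj (x i) w → ((∀ j, w ≠ x j) ↔ w ≠ x (i + 1) ∧ w ≠ x (i + 3)) := by
    refine fun w hw => ⟨fun h => ⟨h _, h _⟩, fun ⟨h1, h3⟩ j => ?_⟩
    obtain ⟨d, rfl⟩ : ∃ d, j = i + d := ⟨j - i, by abel⟩
    fin_cases d
    · rintro rfl; simp at hw
    · exact h1
    · rintro rfl; exact not_adj_add_two_of_cycle4 hcyc htf i hw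
    · exact h3
  refine (existsUnique_congr fun w => ?_).2
    (existsUnique_adj_ne_ne_of_degree_eq_three (hreg (x i)) (hcyc i)
      (adj_add_three_of_cycle4 hcyc i) (hinj.ne (by simp)))
  exact ⟨fun ⟨hw, h⟩ => ⟨hw, (hoff w hw).1 h⟩, fun ⟨hw, h⟩ => ⟨hw, (hoff w hw).2 h⟩⟩

theorem color_eq_of_adj_off_cycle4 {c : V → Fin 4} (hc : IsTotallySilver G c)
    (hinj : Function.Injective x) {i : Fin 4} {y : V} (hy : G.Adj (x i) y)
    (hoff : ∀ j, y ≠ x j) : c y = c (x (i + 2)) := by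
  have hcx := injective_comp_of_cycle4 hcyc hc hinj
  have hN := hc.injOn_closedNbhd (x i)
  have h1 := adj_add_three_of_cycle4 hcyc i
  exact Fin.four_eq_of_ne (hcx.ne (by simp)) (hcx.ne (by simp)) (hcx.ne (by simp))
    (hN.ne (.inr hy) (.inl rfl) (hoff _)) (hN.ne (.inr hy) (.inr (hcyc i)) (hoff _))
    (hN.ne (.inr hy) (.inr h1) (hoff _)) (hcx.ne (by simp)) (hcx.ne (by simp))
    (hcx.ne (by simp))

end SimpleGraph

end

theorem stmt_12_general {V : Type*} [Fintype V] (G : SimpleGraph V) [DecidableRel G.Adj]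
    (hreg : G.IsRegularOfDegree 3)
    (hsilver : ∃ c : V → Fin 4, IsTotallySilver G c)
    (htf : ¬ ∃ a b d : V, G.Adj a b ∧ G.Adj b d ∧ G.Adj a d)
    (x : Fin 4 → V) (hinj : Function.Injective x)
    (hcyc : ∀ i, G.Adj (x i) (x (i + 1))) :
    (∀ i, ∃! w, G.Adj (x i) w ∧ ∀ j, w ≠ x j) ∧
    (∀ y : Fin 4 → V, (∀ i, G.Adj (x i) (y i) ∧ ∀ j, y i ≠ x j) →
      Function.Injective y ∧
      ∀ c : V → Fin 4, IsTotallySilver G c → ∀ i, c (y i) = c (x (i + 2))) := by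
  refine ⟨G.existsUnique_adj_off_cycle4 hcyc hreg htf hinj, fun y hy => ?_⟩
  have hcolor : ∀ c : V → Fin 4, IsTotallySilver G c → ∀ i, c (y i) = c (x (i + 2)) :=
    fun c hc i => G.color_eq_of_adj_off_cycle4 hcyc hc hinj (hy i).1 (hy i).2
  refine ⟨fun i j hij => ?_, hcolor⟩
  obtain ⟨c, hc⟩ := hsilver
  have hx : c (x (i + 2)) = c (x (j + 2)) := by rw [← hcolor c hc, ← hcolor c hc, hij]
  exact add_right_cancel (SimpleGraph.injective_comp_of_cycle4 hcyc hc hinj hx)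

theorem stmt_12 {V : Type*} [Fintype V] (G : SimpleGraph V) [DecidableRel G.Adj]
    (hreg : G.IsRegularOfDegree 3)
    (hsilver : ∃ c : V → Fin 4, IsTotallySilver G c)
    (htf : ¬ ∃ a b d : V, G.Adj a b ∧ G.Adj b d ∧ G.Adj a d)
    (hcard : 4 < Fintype.card V)
    (x : Fin 4 → V) (hinj : Function.Injective x)
    (hcyc : ∀ i, G.Adj (x i) (x (i + 1))) :
    (∀ i, ∃! w, G.Adj (x i) w ∧ ∀ j, w ≠ x j) ∧
    (∀ y : Fin 4 → V, (∀ i, G.Adj (x i) (y i) ∧ ∀ j, y i ≠ x j) →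
      Function.Injective y ∧
      ∀ c : V → Fin 4, IsTotallySilver G c → ∀ i, c (y i) = c (x (i + 2))) :=
  stmt_12_general G hreg hsilver htf x hinj hcyc
end

section
/- The generalized Petersen graph P(n,1) (the prism over an n-cycle) is totally silver if and only if 4 divides n. -/
open Function SimpleGraph

theorem isTotallySilver_iff_bijective {V : Type*} {k : ℕ} {G : SimpleGraph V} {c : V → Fin k}
    {N : V → Fin k → V} (hN : ∀ v w, w = v ∨ G.Adj v w ↔ w ∈ Set.range (N v)) :
    IsTotallySilver G c ↔ ∀ v, Bijective (c ∘ N v) := by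
  refine ⟨fun hc v => Finite.surjective_iff_bijective.mp fun i => ?_, fun hc v i => ?_⟩
  · obtain ⟨w, ⟨hw, rfl⟩, -⟩ := hc v i
    obtain ⟨m, rfl⟩ := (hN v w).mp hw
    exact ⟨m, rfl⟩
  · obtain ⟨m, rfl⟩ := (hc v).surjective i
    refine ⟨N v m, ⟨(hN v _).mpr ⟨m, rfl⟩, rfl⟩, ?_⟩
    rintro w ⟨hw, hcw⟩
    obtain ⟨m', rfl⟩ := (hN v w).mp hw
    rw [(hc v).injective hcw]

theorem four_dvd_of_periodic {G α : Type*} [AddGroup G] {a : G → α} {g : G} {n : ℕ}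
    (hn : n • g = 0) (h4 : Periodic a (4 • g)) (h1 : ∀ x, a (x + g) ≠ a x)
    (h2 : ∀ x, a (x + 2 • g) ≠ a x) : 4 ∣ n := by
  have hgcd : Periodic a (Nat.gcd 4 n • g) := by
    rw [← natCast_zsmul, Nat.gcd_eq_gcd_ab, add_zsmul, mul_comm, mul_zsmul, natCast_zsmul, mul_comm,
      mul_zsmul, natCast_zsmul, hn, zsmul_zero, add_zero]
    exact h4.zsmul _
  have hdvd : Nat.gcd 4 n ∣ 4 := Nat.gcd_dvd_left 4 n
  have hle : Nat.gcd 4 n ≤ 4 := Nat.le_of_dvd (by norm_num) hdvd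
  interval_cases h : Nat.gcd 4 n
  · simp at h
  · exact absurd (hgcd 0) (by simpa using h1 0)
  · exact absurd (hgcd 0) (h2 0)
  · norm_num at hdvd
  · exact Nat.gcd_eq_left_iff_dvd.mp h

theorem cycleGraph_eq_or_adj_iff {n : ℕ} [NeZero n] {u w : Fin n} :
    w = u ∨ (cycleGraph n).Adj u w ↔ w = u ∨ w = u + 1 ∨ w = u - 1 := by
  rcases n with _ | _ | n
  · exact u.elim0
  · simp [Fin.subsingleton_one.elim w u]
  · rw [cycleGraph_adj, sub_eq_iff_eq_add', sub_eq_iff_eq_add', eq_sub_iff_add_eq, eq_comm (b := u)]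
    tauto

def prismGraph (n : ℕ) : SimpleGraph (Fin n × Fin 2) := (cycleGraph n).boxProd ⊤

-- For `n ≤ 2` this enumeration of the closed neighbourhood of `v` has repetitions.
def prismNbhd {n : ℕ} [NeZero n] (v : Fin n × Fin 2) : Fin 4 → Fin n × Fin 2 :=
  ![v, (v.1 + 1, v.2), (v.1 - 1, v.2), (v.1, v.2 + 1)]

theorem prismGraph_eq_or_adj_iff {n : ℕ} [NeZero n] (v w : Fin n × Fin 2) :
    w = v ∨ (prismGraph n).Adj v w ↔ w ∈ Set.range (prismNbhd v) := by
  obtain ⟨i, j⟩ := v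
  obtain ⟨i', j'⟩ := w
  obtain rfl | rfl : j' = j ∨ j' = j + 1 := by revert j j'; decide
  · simp only [prismGraph, prismNbhd, boxProd_adj, Prod.mk.injEq, SimpleGraph.irrefl,
      cycleGraph_eq_or_adj_iff, Matrix.range_cons, Matrix.range_empty, Set.union_empty,
      Set.union_singleton, Set.union_insert, Set.mem_insert_iff, Set.mem_singleton_iff, and_true,
      or_false, false_and]
    tauto
  · have hj : j + 1 ≠ j := by revert j; decide
    simp [prismGraph, prismNbhd, hj, hj.symm, eq_comm (a := i')]

theorem isTotallySilver_prismGraph_iff {n : ℕ} [NeZero n] {c : Fin n × Fin 2 → Fin 4} :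
    IsTotallySilver (prismGraph n) c ↔ ∀ v, Bijective (c ∘ prismNbhd v) :=
  isTotallySilver_iff_bijective prismGraph_eq_or_adj_iff

namespace IsTotallySilver

variable {n : ℕ} [NeZero n] {c : Fin n × Fin 2 → Fin 4} (hc : IsTotallySilver (prismGraph n) c)
include hc

theorem prism_color_ne (v : Fin n × Fin 2) {m m' : Fin 4} (h : m ≠ m') :
    c (prismNbhd v m) ≠ c (prismNbhd v m') :=
  (isTotallySilver_prismGraph_iff.mp hc v).injective.ne h

-- `c (i + 1, j + 1)` is a colour of the neighbourhood of `(i, j)`, and the neighbourhoods of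
-- `(i + 1, j)` and `(i, j + 1)` exclude every vertex of it but `(i - 1, j)`.
theorem prism_color_succ_succ (i : Fin n) (j : Fin 2) : c (i + 1, j + 1) = c (i - 1, j) := by
  have hj : j + 1 + 1 = j := by revert j; decide
  obtain ⟨m, hm⟩ := (isTotallySilver_prismGraph_iff.mp hc (i, j)).surjective (c (i + 1, j + 1))
  fin_cases m
  · refine absurd hm ?_
    simpa [prismNbhd, hj] using hc.prism_color_ne (i, j + 1) (m := 3) (m' := 1) (by decide)
  · refine absurd hm ?_
    simpa [prismNbhd] using hc.prism_color_ne (i + 1, j) (m := 0) (m' := 3) (by decide)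
  · simpa [prismNbhd] using hm.symm
  · refine absurd hm ?_
    simpa [prismNbhd] using hc.prism_color_ne (i, j + 1) (m := 0) (m' := 1) (by decide)

theorem prism_periodic : Periodic (fun i => c (i, 0)) (4 • 1) := by
  have h2 (x : Fin n) : c (x + 1 + 1, 0) = c (x - 1 - 1, 0) := by
    have e1 := hc.prism_color_succ_succ (x + 1) 1
    have e2 := hc.prism_color_succ_succ (x - 1) 0
    simp only [add_sub_cancel_right, sub_add_cancel, zero_add] at e1 e2
    rw [show (1 + 1 : Fin 2) = 0 by decide] at e1
    rw [e1, e2]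
  intro i
  calc c (i + 4 • 1, 0) = c (i + 1 + 1 + 1 + 1, 0) := by abel_nf
    _ = c (i, 0) := by rw [h2]; abel_nf

theorem four_dvd_of_prism : 4 ∣ n := by
  refine four_dvd_of_periodic (g := (1 : Fin n)) ?_ hc.prism_periodic (fun i => ?_) (fun i => ?_)
  · simpa using card_nsmul_eq_zero' (G := Fin n) (x := 1)
  · simpa [prismNbhd] using hc.prism_color_ne (i, 0) (m := 1) (m' := 0) (by decide)
  · simpa [prismNbhd, two_nsmul, add_assoc] using
      hc.prism_color_ne (i + 1, 0) (m := 1) (m' := 2) (by decide)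

end IsTotallySilver

def Fin.valZModHom {m n : ℕ} [NeZero n] (h : m ∣ n) : Fin n →+ ZMod m :=
  AddMonoidHom.mk' (fun i => (i.val : ZMod m)) fun a b => by
    rw [Fin.val_add, ← Nat.cast_add, ZMod.natCast_eq_natCast_iff', Nat.mod_mod_of_dvd _ h]

theorem Fin.valZModHom_one {m n : ℕ} [NeZero n] (h : m ∣ n) : Fin.valZModHom h 1 = 1 := by
  simpa [Fin.valZModHom, Fin.val_one'] using
    (ZMod.natCast_eq_natCast_iff' (1 % n) 1 m).mpr (Nat.mod_mod_of_dvd 1 h)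

def prismColoring {n : ℕ} [NeZero n] (h : 4 ∣ n) (v : Fin n × Fin 2) : ZMod 4 :=
  Fin.valZModHom h v.1 + 2 * v.2.val

theorem prismColoring_prismNbhd {n : ℕ} [NeZero n] (h : 4 ∣ n) (v : Fin n × Fin 2) (m : Fin 4) :
    prismColoring h (prismNbhd v m) = prismColoring h v + ![0, 1, -1, 2] m := by
  have hj (j : Fin 2) : 2 * ((j + 1).val : ZMod 4) = 2 * j.val + 2 := by revert j; decide
  fin_cases m <;> simp [prismColoring, prismNbhd, Fin.valZModHom_one, hj] <;> ring

theorem isTotallySilver_prismColoring {n : ℕ} [NeZero n] (h : 4 ∣ n) :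
    IsTotallySilver (prismGraph n) ((ZMod.finEquiv 4).symm ∘ prismColoring h) := by
  refine isTotallySilver_prismGraph_iff.mpr fun v => Finite.injective_iff_bijective.mp ?_
  have hcomp : prismColoring h ∘ prismNbhd v = (prismColoring h v + ![0, 1, -1, 2] ·) :=
    funext (prismColoring_prismNbhd h v)
  rw [comp_assoc, hcomp]
  exact (ZMod.finEquiv 4).symm.injective.comp ((add_right_injective _).comp (by decide))

theorem stmt_13_general (n : ℕ) :
    (∃ c : Fin n × Fin 2 → Fin 4,
      IsTotallySilver ((SimpleGraph.cycleGraph n).boxProd (⊤ : SimpleGraph (Fin 2))) c) ↔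
    4 ∣ n := by
  rcases Nat.eq_zero_or_pos n with rfl | hpos
  · exact iff_of_true ⟨fun v => v.1.elim0, fun v => v.1.elim0⟩ (dvd_zero 4)
  have : NeZero n := ⟨hpos.ne'⟩
  exact ⟨fun ⟨c, hc⟩ => hc.four_dvd_of_prism, fun h => ⟨_, isTotallySilver_prismColoring h⟩⟩

theorem stmt_13 (n : ℕ) (hn : 3 ≤ n) :
    (∃ c : Fin n × Fin 2 → Fin 4,
      IsTotallySilver ((SimpleGraph.cycleGraph n).boxProd (⊤ : SimpleGraph (Fin 2))) c) ↔
    4 ∣ n :=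
  stmt_13_general n
end

section
/- For every n ≥ 3 divisible by 3, the graph E_n, consisting of three disjoint n-cycles u_1...u_n, v_1...v_n, w_1...w_n together with vertices z_1,...,z_n where z_i is joined to u_i, v_i, w_i, is cubic and totally silver. -/
/-!
Listing each closed neighbourhood as four vertices, it suffices that the colours along each list
are distinct: then every colour occurs exactly once, and the three neighbours are distinct.
Because `3 ∣ n`, reduction mod 3 is additive on `Fin n`, so the cycle vertex `(a, i)` and its
cycle neighbours get the colours `x, x + 1, x - 1` (with `x = a + i mod 3`) next to the hub's `3`,
and the hub `z_i` gets `3` next to `i, i + 1, i + 2` mod 3.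
-/

open Function SimpleGraph

section Enumeration

variable {V : Type*} {d : ℕ} {G : SimpleGraph V} {c : V → Fin (d + 1)} {f : V → Fin (d + 1) → V}

theorem isTotallySilver_of_injective_comp (hf : ∀ v, Set.range (f v) = insert v (G.neighborSet v))
    (hc : ∀ v, Injective (c ∘ f v)) : IsTotallySilver G c := by
  intro v i
  obtain ⟨j, rfl⟩ := ((Finite.injective_iff_bijective.mp (hc v)).surjective i)
  have hmem : ∀ w, (w = v ∨ G.Adj v w) ↔ w ∈ Set.range (f v) := fun w => by rw [hf v]; rfl
  refine ⟨f v j, ⟨(hmem _).2 ⟨j, rfl⟩, rfl⟩, ?_⟩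
  rintro w ⟨hw, hcw⟩
  obtain ⟨j', rfl⟩ := (hmem w).1 hw
  rw [hc v hcw]

theorem ncard_neighborSet_of_injective_comp (hf : ∀ v, Set.range (f v) = insert v (G.neighborSet v))
    (hc : ∀ v, Injective (c ∘ f v)) (v : V) : (G.neighborSet v).ncard = d := by
  have hfin : (G.neighborSet v).Finite :=
    (Set.finite_range (f v)).subset (hf v ▸ Set.subset_insert _ _)
  have := Set.ncard_range_of_injective (hc v).of_comp
  rw [hf v, Set.ncard_insert_of_notMem G.notMem_neighborSet_self hfin, Nat.card_fin] at this
  omega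

end Enumeration

def Fin.modHom {m n : ℕ} [NeZero m] [NeZero n] (h : m ∣ n) : Fin n →+ Fin m where
  toFun i := Fin.ofNat m i
  map_zero' := by simp
  map_add' i j := by
    ext
    simp [Fin.val_add, Nat.mod_mod_of_dvd _ h]

/-- The paper's `E_n` with cycle step `o`: `inl (a, i)` is `u_i, v_i, w_i` for `a = 0, 1, 2`, and
`inr i` is `z_i`. -/
def threeCyclesWithHubs (n : ℕ) (o : Fin n) : SimpleGraph ((Fin 3 × Fin n) ⊕ Fin n) :=
  SimpleGraph.fromRel fun p q =>
    (∃ (a : Fin 3) (i : Fin n), p = Sum.inl (a, i) ∧ q = Sum.inl (a, i + o)) ∨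
    (∃ (a : Fin 3) (i : Fin n), p = Sum.inl (a, i) ∧ q = Sum.inr i)

namespace threeCyclesWithHubs

variable {n : ℕ} {o : Fin n}

theorem adj_inl_iff [NeZero n] (ho : o ≠ 0) (a : Fin 3) (i : Fin n) (x) :
    (threeCyclesWithHubs n o).Adj (.inl (a, i)) x ↔
      x = .inl (a, i + o) ∨ x = .inl (a, i - o) ∨ x = .inr i := by
  simp only [threeCyclesWithHubs, fromRel_adj]
  constructor
  · rintro ⟨-, ⟨a', i', h, h'⟩ | ⟨a', i', h, h'⟩ | ⟨a', i', h, h'⟩ | ⟨a', i', h, h'⟩⟩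
    all_goals simp_all [eq_sub_iff_add_eq]
  · rintro (rfl | rfl | rfl)
    all_goals simp [ho, eq_comm (a := i)]

theorem adj_inr_iff (i : Fin n) (x) :
    (threeCyclesWithHubs n o).Adj (.inr i) x ↔ ∃ a : Fin 3, x = .inl (a, i) := by
  simp only [threeCyclesWithHubs, fromRel_adj]
  constructor
  · rintro ⟨-, ⟨a', i', h, h'⟩ | ⟨a', i', h, h'⟩ | ⟨a', i', h, h'⟩ | ⟨a', i', h, h'⟩⟩
    all_goals simp_all
  · rintro ⟨a, rfl⟩
    simp

variable (o) in
def closedNbhdEnum : (Fin 3 × Fin n) ⊕ Fin n → Fin 4 → (Fin 3 × Fin n) ⊕ Fin n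
  | .inl (a, i) => ![.inl (a, i), .inl (a, i + o), .inl (a, i - o), .inr i]
  | .inr i => ![.inr i, .inl (0, i), .inl (1, i), .inl (2, i)]

theorem range_closedNbhdEnum [NeZero n] (ho : o ≠ 0) (v) :
    Set.range (closedNbhdEnum o v) = insert v ((threeCyclesWithHubs n o).neighborSet v) := by
  ext x
  rcases v with ⟨a, i⟩ | i
  · simp [closedNbhdEnum, adj_inl_iff ho, eq_comm (a := x)]
    tauto
  · simp [closedNbhdEnum, adj_inr_iff, eq_comm (a := x), Fin.exists_fin_succ]
    tauto

variable (n) in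
def coloring : (Fin 3 × Fin n) ⊕ Fin n → Fin 4
  | .inl (a, i) => (a + Fin.ofNat 3 i).castSucc
  | .inr _ => Fin.last 3

theorem injective_coloring_comp_closedNbhdEnum [NeZero n] (h3 : 3 ∣ n)
    (ho : Fin.ofNat 3 o ≠ 0) (v) : Injective (coloring n ∘ closedNbhdEnum o v) := by
  rcases v with ⟨a, i⟩ | i
  · have key : ∀ x y : Fin 3, y ≠ 0 →
        Injective ![x.castSucc, (x + y).castSucc, (x - y).castSucc, Fin.last 3] := by
      decide
    have hadd : Fin.ofNat 3 (i + o : Fin n) = Fin.ofNat 3 i + Fin.ofNat 3 o :=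
      map_add (Fin.modHom h3) i o
    have hsub : Fin.ofNat 3 (i - o : Fin n) = Fin.ofNat 3 i - Fin.ofNat 3 o :=
      map_sub (Fin.modHom h3) i o
    convert key (a + Fin.ofNat 3 i) _ ho using 1
    funext j
    fin_cases j <;>
      simp [closedNbhdEnum, coloring, hadd, hsub, ← add_assoc, ← add_sub_assoc, -Fin.ofNat_eq_cast]
  · have key : ∀ x : Fin 3,
        Injective ![Fin.last 3, (0 + x).castSucc, (1 + x).castSucc, (2 + x).castSucc] := by
      decide
    convert key (Fin.ofNat 3 i) using 1
    funext j
    fin_cases j <;> rfl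

theorem ne_zero_of_ofNat_ne_zero [NeZero n] (h3 : 3 ∣ n) (ho : Fin.ofNat 3 o ≠ 0) : o ≠ 0 := by
  rintro rfl
  exact ho (map_zero (Fin.modHom h3))

theorem ncard_neighborSet [NeZero n] (h3 : 3 ∣ n) (ho : Fin.ofNat 3 o ≠ 0) (v) :
    ((threeCyclesWithHubs n o).neighborSet v).ncard = 3 :=
  ncard_neighborSet_of_injective_comp (c := coloring n)
    (range_closedNbhdEnum (ne_zero_of_ofNat_ne_zero h3 ho))
    (injective_coloring_comp_closedNbhdEnum h3 ho) v

theorem isTotallySilver_coloring [NeZero n] (h3 : 3 ∣ n) (ho : Fin.ofNat 3 o ≠ 0) :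
    IsTotallySilver (threeCyclesWithHubs n o) (coloring n) :=
  isTotallySilver_of_injective_comp (range_closedNbhdEnum (ne_zero_of_ofNat_ne_zero h3 ho))
    (injective_coloring_comp_closedNbhdEnum h3 ho)

end threeCyclesWithHubs

theorem stmt_14 (n : ℕ) (hn : 3 ≤ n) (h3 : 3 ∣ n) :
    let E : SimpleGraph ((Fin 3 × Fin n) ⊕ Fin n) := SimpleGraph.fromRel (fun p q =>
      (∃ (a : Fin 3) (i : Fin n), p = Sum.inl (a, i) ∧ q = Sum.inl (a, i + (⟨1, by omega⟩ : Fin n))) ∨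
      (∃ (a : Fin 3) (i : Fin n), p = Sum.inl (a, i) ∧ q = Sum.inr i))
    (∀ v, (E.neighborSet v).ncard = 3) ∧
    ∃ c : (Fin 3 × Fin n) ⊕ Fin n → Fin 4, IsTotallySilver E c := by
  intro E
  have : NeZero n := ⟨by omega⟩
  have ho : Fin.ofNat 3 (⟨1, by omega⟩ : Fin n).val ≠ 0 := (by decide : Fin.ofNat 3 1 ≠ 0)
  exact ⟨threeCyclesWithHubs.ncard_neighborSet h3 ho, _,
    threeCyclesWithHubs.isTotallySilver_coloring h3 ho⟩
end

section
/- For every n ≥ 3 not divisible by 3, the graph M_n, consisting of a 3n-cycle u_1u_2...u_{3n}u_1 together with vertices z_1,...,z_n where z_i is joined to u_i, u_{n+i}, u_{2n+i}, is cubic and totally silver. -/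
open Function

section

variable {V : Type*} {k : ℕ} {G : SimpleGraph V}

theorem SimpleGraph.ncard_neighborSet_of_eq_range {v : V} {f : Fin k → V}
    (hf : G.neighborSet v = Set.range f) (hinj : Injective f) : (G.neighborSet v).ncard = k := by
  rw [hf, Set.ncard_range_of_injective hinj, Nat.card_eq_fintype_card, Fintype.card_fin]

theorem isTotallySilver_of_neighborSet_eq_range {c : V → Fin (k + 1)} (nbr : V → Fin k → V)
    (hnbr : ∀ v, G.neighborSet v = Set.range (nbr v))
    (hc : ∀ v, Injective (c ∘ Fin.cons v (nbr v))) : IsTotallySilver G c := by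
  intro v i
  set f : Fin (k + 1) → V := Fin.cons v (nbr v)
  have hclosed : ∀ w, (w = v ∨ G.Adj v w) ↔ w ∈ Set.range f := fun w => by
    rw [Fin.range_cons, ← hnbr]; rfl
  obtain ⟨t, ht⟩ := (Finite.injective_iff_bijective.mp (hc v)).surjective i
  refine ⟨f t, ⟨(hclosed _).mpr ⟨t, rfl⟩, ht⟩, ?_⟩
  rintro w ⟨hw, rfl⟩
  obtain ⟨s, rfl⟩ := (hclosed w).mp hw
  exact congrArg f (hc v ht.symm)

end

theorem Nat.mod_eq_iff_of_lt_three_mul {a i n : ℕ} (ha : a < 3 * n) (hi : i < n) :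
    a % n = i ↔ a = i ∨ a = n + i ∨ a = 2 * n + i := by
  have hq : a / n < 3 := Nat.div_lt_of_lt_mul (by rwa [mul_comm])
  have hr := Nat.mod_lt a (by omega : 0 < n)
  have hdiv := Nat.div_add_mod a n
  interval_cases h : a / n <;> omega

namespace Mn

open SimpleGraph Sum

variable {n : ℕ} [NeZero n]

/-- Written `⟨1, _⟩` rather than `1` so that `graph` is definitionally the graph `M` of the
statement. -/
def one : Fin (3 * n) := ⟨1, by have := NeZero.pos n; omega⟩

def graph : SimpleGraph (Fin (3 * n) ⊕ Fin n) := SimpleGraph.fromRel (fun p q =>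
  (∃ j : Fin (3 * n), p = inl j ∧ q = inl (j + one)) ∨
  (∃ i : Fin n, p = inr i ∧
    (q = inl ⟨i.val, by omega⟩ ∨ q = inl ⟨n + i.val, by omega⟩ ∨
      q = inl ⟨2 * n + i.val, by omega⟩)))

theorem add_one_ne_sub_one (a : Fin (3 * n)) : a + one ≠ a - one := by
  have : 2 < 3 * n := by have := NeZero.pos n; omega
  rw [sub_eq_add_neg, Ne, add_right_inj, ← add_eq_zero_iff_eq_neg, Fin.ext_iff, Fin.val_add]
  simp [one, Nat.mod_eq_of_lt this]

theorem adj_inl_inl (a b : Fin (3 * n)) :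
    graph.Adj (inl a) (inl b) ↔ b = a + one ∨ b = a - one := by
  rw [eq_sub_iff_add_eq, eq_comm (a := b + one)]
  simp only [graph, fromRel_adj, ne_eq, inl.injEq, reduceCtorEq, false_and, exists_false,
    or_false, exists_eq_left']
  refine and_iff_right_of_imp ?_
  rintro (rfl | rfl) <;> simp [one, Fin.ext_iff]

theorem adj_inr_inl (i : Fin n) (a : Fin (3 * n)) :
    graph.Adj (inr i) (inl a) ↔
      a.val = i.val ∨ a.val = n + i.val ∨ a.val = 2 * n + i.val := by
  simp [graph, Fin.ext_iff (a := a)]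

theorem adj_inl_inr (a : Fin (3 * n)) (i : Fin n) :
    graph.Adj (inl a) (inr i) ↔ a.val % n = i.val := by
  rw [adj_comm, adj_inr_inl, Nat.mod_eq_iff_of_lt_three_mul a.isLt i.isLt]

theorem not_adj_inr_inr (i j : Fin n) : ¬ graph.Adj (inr i) (inr j) := by
  simp [graph]

def nbr : Fin (3 * n) ⊕ Fin n → Fin 3 → Fin (3 * n) ⊕ Fin n
  | inl a => ![inl (a + one), inl (a - one), inr ⟨a.val % n, Nat.mod_lt _ (NeZero.pos n)⟩]
  | inr i =>
    ![inl ⟨i.val, by omega⟩, inl ⟨n + i.val, by omega⟩, inl ⟨2 * n + i.val, by omega⟩]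

theorem neighborSet_eq_range (v : Fin (3 * n) ⊕ Fin n) :
    graph.neighborSet v = Set.range (nbr v) := by
  ext w
  rcases v with a | i <;> rcases w with b | j <;>
    simp only [mem_neighborSet, adj_inl_inl, adj_inl_inr, adj_inr_inl, not_adj_inr_inr, nbr,
      Matrix.range_cons, Matrix.range_empty, Set.union_empty, Set.union_singleton,
      Set.union_insert, Set.mem_insert_iff, Set.mem_singleton_iff, inl.injEq, inr.injEq,
      reduceCtorEq, Fin.ext_iff, or_self, or_false, false_or] <;>
    omega

theorem injective_nbr (v : Fin (3 * n) ⊕ Fin n) : Injective (nbr v) := by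
  have := NeZero.pos n
  rw [← List.nodup_ofFn]
  rcases v with a | i <;>
    simp only [nbr, List.ofFn_succ, List.ofFn_zero, Matrix.cons_val_zero, Matrix.cons_val_succ,
      Matrix.cons_val_fin_one, List.nodup_cons, List.mem_cons, List.not_mem_nil, List.nodup_nil,
      inl.injEq, reduceCtorEq, add_one_ne_sub_one, Fin.mk.injEq, or_false, not_or,
      not_false_eq_true, and_true]
  omega

def coloring (n : ℕ) : Fin (3 * n) ⊕ Fin n → Fin 4
  | inl j => ⟨j.val % 3, by omega⟩
  | inr _ => Fin.last 3

theorem val_add_one_mod_three (a : Fin (3 * n)) : (a + one).val % 3 = (a.val + 1) % 3 := by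
  rw [Fin.val_add, Nat.mod_mod_of_dvd _ (dvd_mul_right 3 n)]
  rfl

theorem val_sub_one_mod_three (a : Fin (3 * n)) : (a - one).val % 3 = (a.val + 2) % 3 := by
  rw [Fin.val_sub, Nat.mod_mod_of_dvd _ (dvd_mul_right 3 n)]
  simp only [one]
  omega

theorem injective_coloring_comp_cons (h3 : ¬ 3 ∣ n) (v : Fin (3 * n) ⊕ Fin n) :
    Injective (coloring n ∘ Fin.cons v (nbr v)) := by
  rw [← List.nodup_ofFn]
  rcases v with a | i <;>
    simp only [nbr, coloring, Matrix.Fin.cons_vecCons, List.ofFn_succ, List.ofFn_zero, comp_apply,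
      Matrix.cons_val_zero, Matrix.cons_val_succ, Matrix.cons_val_fin_one, Fin.reduceLast,
      List.nodup_cons, List.mem_cons, List.not_mem_nil, List.nodup_nil, Fin.ext_iff,
      Fin.coe_ofNat_eq_mod, Nat.reduceMod, or_false, not_or, not_false_eq_true, and_true,
      val_add_one_mod_three, val_sub_one_mod_three] <;>
    omega

end Mn

theorem stmt_15 (n : ℕ) (hn : 3 ≤ n) (h3 : ¬ 3 ∣ n) :
    let M : SimpleGraph (Fin (3 * n) ⊕ Fin n) := SimpleGraph.fromRel (fun p q =>
      (∃ j : Fin (3 * n), p = Sum.inl j ∧ q = Sum.inl (j + (⟨1, by omega⟩ : Fin (3 * n)))) ∨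
      (∃ i : Fin n, p = Sum.inr i ∧
        (q = Sum.inl ⟨i.val, by have := i.isLt; omega⟩ ∨
         q = Sum.inl ⟨n + i.val, by have := i.isLt; omega⟩ ∨
         q = Sum.inl ⟨2 * n + i.val, by have := i.isLt; omega⟩)))
    (∀ v, (M.neighborSet v).ncard = 3) ∧
    ∃ c : Fin (3 * n) ⊕ Fin n → Fin 4, IsTotallySilver M c := by
  intro M
  have : NeZero n := ⟨by omega⟩
  change (∀ v, (Mn.graph.neighborSet v).ncard = 3) ∧
    ∃ c : Fin (3 * n) ⊕ Fin n → Fin 4, IsTotallySilver Mn.graph c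
  exact ⟨fun v => Mn.graph.ncard_neighborSet_of_eq_range (Mn.neighborSet_eq_range v)
      (Mn.injective_nbr v),
    Mn.coloring n, isTotallySilver_of_neighborSet_eq_range Mn.nbr Mn.neighborSet_eq_range
      (Mn.injective_coloring_comp_cons h3)⟩
end

section
/- The Möbius ladder V_{2n} is totally silver if and only if n ≡ 2 (mod 4). -/
open Function SimpleGraph Fin.CommRing

theorem SimpleGraph.fromRel_add_eq_circulantGraph {G : Type*} [AddCommGroup G] (s t : G) :
    fromRel (fun a b => b = a + s ∨ b = a + t) = circulantGraph {s, t} := by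
  ext a b
  simp only [fromRel_adj, circulantGraph_adj, Set.mem_insert_iff, Set.mem_singleton_iff,
    sub_eq_iff_eq_add']
  tauto

theorem Fin.four_xor_eq_of_surjective {f : Fin 4 → Fin 4} (hf : Surjective f) :
    (f 3).val = (f 0).val ^^^ (f 1).val ^^^ (f 2).val := by
  have key : ∀ a b c d : Fin 4, Surjective ![a, b, c, d] → d.val = a.val ^^^ b.val ^^^ c.val := by
    decide
  exact key _ _ _ _ (FinVec.etaExpand_eq f ▸ hf)

theorem Fin.four_eq_of_xor {a b c d e : Fin 4}
    (h : c.val = (a.val ^^^ b.val ^^^ c.val) ^^^ (b.val ^^^ c.val ^^^ d.val) ^^^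
      (c.val ^^^ d.val ^^^ e.val)) : a = e := by
  revert a b c d e; decide

section Circulant

variable {G : Type*} [AddCommGroup G] {s t : G}

def circulantNbhd (s t v : G) : Fin 4 → G := ![v - s, v, v + s, v + t]

theorem exists_circulantNbhd_eq (ht : t + t = 0) {v w : G}
    (h : w = v ∨ (circulantGraph {s, t}).Adj v w) : ∃ j, circulantNbhd s t v j = w := by
  rcases h with rfl | ⟨-, h⟩
  · exact ⟨1, rfl⟩
  simp only [Set.mem_insert_iff, Set.mem_singleton_iff] at h
  rcases h with (rfl | rfl) | (rfl | rfl)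
  · exact ⟨0, by simp [circulantNbhd]⟩
  · exact ⟨3, by simp only [circulantNbhd, Matrix.cons_val]; grind⟩
  · exact ⟨2, by simp [circulantNbhd]⟩
  · exact ⟨3, by simp [circulantNbhd]⟩

theorem circulantNbhd_eq_or_adj (hs : s ≠ 0) (ht : t ≠ 0) (v : G) (j : Fin 4) :
    circulantNbhd s t v j = v ∨ (circulantGraph {s, t}).Adj v (circulantNbhd s t v j) := by
  fin_cases j <;> simp [circulantNbhd, eq_sub_iff_add_eq, hs, ht]

variable {c : G → Fin 4}

theorem IsTotallySilver.surjective_comp_circulantNbhd (ht : t + t = 0)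
    (hc : IsTotallySilver (circulantGraph {s, t}) c) (v : G) :
    Surjective (c ∘ circulantNbhd s t v) := fun i => by
  obtain ⟨w, ⟨hw, rfl⟩, -⟩ := hc v i
  obtain ⟨j, rfl⟩ := exists_circulantNbhd_eq ht hw
  exact ⟨j, rfl⟩

theorem IsTotallySilver.injective_comp_circulantNbhd (ht : t + t = 0)
    (hc : IsTotallySilver (circulantGraph {s, t}) c) (v : G) :
    Injective (c ∘ circulantNbhd s t v) :=
  Finite.injective_iff_surjective.2 (hc.surjective_comp_circulantNbhd ht v)

theorem IsTotallySilver.periodic (ht : t + t = 0)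
    (hc : IsTotallySilver (circulantGraph {s, t}) c) : Periodic c (4 • s) := by
  have hxor (u : G) : (c (u + t)).val = (c (u - s)).val ^^^ (c u).val ^^^ (c (u + s)).val :=
    Fin.four_xor_eq_of_surjective (hc.surjective_comp_circulantNbhd ht u)
  have hsymm (u : G) : c (u - s - s) = c (u + s + s) := by
    have h := hxor (u + t)
    rw [add_assoc, ht, add_zero, add_sub_right_comm, add_right_comm, hxor (u - s),
      hxor (u + s), hxor u, sub_add_cancel, add_sub_cancel_right] at h
    exact Fin.four_eq_of_xor h
  intro u
  convert (hsymm (u + s + s)).symm using 2 <;> abel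

theorem IsTotallySilver.apply_add_ne (ht : t + t = 0)
    (hc : IsTotallySilver (circulantGraph {s, t}) c) (v : G) : c (v + t) ≠ c v := fun h =>
  absurd (hc.injective_comp_circulantNbhd ht v (a₁ := 3) (a₂ := 1) h) (by decide)

theorem IsTotallySilver.apply_add_add_ne (ht : t + t = 0)
    (hc : IsTotallySilver (circulantGraph {s, t}) c) (v : G) : c (v + s + s) ≠ c v := fun h => by
  have := hc.injective_comp_circulantNbhd ht (v + s) (a₁ := 2) (a₂ := 0)
  simp [circulantNbhd, h] at this

theorem isTotallySilver_circulantGraph_of_add (ht : t + t = 0) (hs : ∀ v, c (v + s) = c v + 1)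
    (ht' : ∀ v, c (v + t) = c v + 2) : IsTotallySilver (circulantGraph {s, t}) c := by
  have hnbhd (v : G) (j : Fin 4) : c (circulantNbhd s t v j) = c v + j - 1 := by
    have hsub : c (v - s) = c v - 1 := eq_sub_of_add_eq (by rw [← hs, sub_add_cancel])
    fin_cases j <;>
      simp only [circulantNbhd, Fin.reduceFinMk, Fin.zero_eta, Fin.mk_one, Matrix.cons_val,
        Matrix.cons_val_zero, Matrix.cons_val_one, hs, ht', hsub] <;> ring
  have hs₀ : s ≠ 0 := fun h => by simpa [h] using hs 0
  have ht₀ : t ≠ 0 := fun h => by simpa [h] using ht' 0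
  intro v i
  refine ⟨circulantNbhd s t v (i - c v + 1),
    ⟨circulantNbhd_eq_or_adj hs₀ ht₀ v _, by rw [hnbhd]; ring⟩, ?_⟩
  rintro w ⟨hw, rfl⟩
  obtain ⟨j, rfl⟩ := exists_circulantNbhd_eq ht hw
  rw [hnbhd]
  congr 1
  ring

end Circulant

theorem natCast_add_self_eq_zero {R : Type*} [AddGroupWithOne R] {n : ℕ} [CharP R (2 * n)] :
    (n : R) + n = 0 := by
  rw [← Nat.cast_add, ← two_mul, CharP.cast_eq_zero]

theorem mod_four_eq_two_of_isTotallySilver {R : Type*} [CommRing R] {n : ℕ} [CharP R (2 * n)]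
    {c : R → Fin 4} (hc : IsTotallySilver (circulantGraph {1, (n : R)}) c) : n % 4 = 2 := by
  have ht : (n : R) + n = 0 := natCast_add_self_eq_zero
  have hper : Periodic c 4 := by simpa using hc.periodic ht
  by_contra hn
  obtain ⟨m, hm⟩ | ⟨m, hm⟩ : (∃ m, n = 4 * m) ∨ ∃ m, n = 2 * m + 1 := by
    rcases (by omega : n % 4 = 0 ∨ n % 2 = 1) with h | h
    exacts [Or.inl ⟨n / 4, by omega⟩, Or.inr ⟨n / 2, by omega⟩]
  · refine hc.apply_add_ne ht 0 ?_
    rw [hm, Nat.cast_mul, mul_comm, Nat.cast_ofNat]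
    exact hper.nat_mul m 0
  · have h2 : (1 + 1 : R) = ((m + 1 : ℕ) : R) * 4 := by
      rw [hm] at ht
      push_cast at ht ⊢
      linear_combination -ht
    refine hc.apply_add_add_ne ht 0 ?_
    rw [add_assoc, h2]
    exact hper.nat_mul (m + 1) 0

theorem isTotallySilver_castVal {n : ℕ} [NeZero (2 * n)] (h : n % 4 = 2) :
    IsTotallySilver (circulantGraph {1, (n : Fin (2 * n))}) (fun v => (v.val : Fin 4)) := by
  have hadd (a b : Fin (2 * n)) : ((a + b).val : Fin 4) = a.val + b.val := by
    rw [Fin.val_add, ← Nat.cast_add]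
    exact (CharP.natCast_eq_natCast (Fin 4) 4).2 (Nat.mod_mod_of_dvd _ (by omega))
  refine isTotallySilver_circulantGraph_of_add natCast_add_self_eq_zero (fun v => ?_) (fun v => ?_)
  · rw [hadd, Fin.val_one', Nat.mod_eq_of_lt (by omega), Nat.cast_one]
  · rw [hadd, Fin.val_natCast, Nat.mod_eq_of_lt (by omega)]
    congr 1
    exact Fin.ext (by simp only [Fin.val_natCast, Fin.coe_ofNat_eq_mod, Nat.reduceMod]; omega)

theorem stmt_16 (n : ℕ) (hn : 2 ≤ n) :
    let Mob : SimpleGraph (Fin (2 * n)) := SimpleGraph.fromRel (fun a b =>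
      b = a + (⟨1, by omega⟩ : Fin (2 * n)) ∨ b = a + (⟨n, by omega⟩ : Fin (2 * n)))
    (∃ c : Fin (2 * n) → Fin 4, IsTotallySilver Mob c) ↔ n % 4 = 2 := by
  intro Mob
  have : NeZero (2 * n) := ⟨by omega⟩
  have hMob : Mob = circulantGraph {1, (n : Fin (2 * n))} := by
    rw [← fromRel_add_eq_circulantGraph, Fin.one_eq_mk_of_lt (by omega),
      Fin.natCast_eq_mk (by omega : n < 2 * n)]
  rw [hMob]
  exact ⟨fun ⟨_, hc⟩ => mod_four_eq_two_of_isTotallySilver hc,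
    fun h => ⟨_, isTotallySilver_castVal h⟩⟩
end

section
/- If c is a totally silver coloring of a graph G, then c'(u,i) := c(u) defines a totally silver coloring of the bipartite double cover G × K_2. -/
/-- The bipartite double cover \`G × K₂\`. -/
def doubleCover {V : Type*} (G : SimpleGraph V) : SimpleGraph (V × Bool) where
  Adj a b := G.Adj a.1 b.1 ∧ a.2 ≠ b.2
  symm := ⟨fun a b h => ⟨h.1.symm, h.2.symm⟩⟩
  loopless := ⟨fun a h => h.2 rfl⟩

/-!
The projection `(u, i) ↦ u` maps every closed neighbourhood of `G × K₂` bijectively onto the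
corresponding closed neighbourhood of `G`: the vertex `(v, b)` goes to `v`, and its neighbours are
exactly the `(w, !b)` with `w ~ v`. Pulling a totally silver coloring back along any map with this
property gives a totally silver coloring.
-/

open Set SimpleGraph

theorem IsTotallySilver.comp {V W : Type*} {G : SimpleGraph V} {H : SimpleGraph W} {k : ℕ}
    {c : V → Fin k} (hc : IsTotallySilver G c) (f : W → V)
    (hf : ∀ x, BijOn f (insert x (H.neighborSet x)) (insert (f x) (G.neighborSet (f x)))) :
    IsTotallySilver H (c ∘ f) := by
  intro x i
  obtain ⟨w, ⟨hw, hcw⟩, hw_unique⟩ := hc (f x) i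
  obtain ⟨y, hy, rfl⟩ := (hf x).surjOn hw
  refine ⟨y, ⟨hy, hcw⟩, fun y' ⟨hy', hcy'⟩ => (hf x).injOn hy' hy ?_⟩
  exact hw_unique (f y') ⟨(hf x).mapsTo hy', hcy'⟩

theorem doubleCover_fst_bijOn_closedNeighborhood {V : Type*} (G : SimpleGraph V) (x : V × Bool) :
    BijOn Prod.fst (insert x ((doubleCover G).neighborSet x))
      (insert x.1 (G.neighborSet x.1)) := by
  refine ⟨?_, ?_, ?_⟩
  · rintro y (rfl | ⟨hadj, -⟩)
    exacts [mem_insert _ _, mem_insert_of_mem _ hadj]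
  · rintro y (rfl | ⟨hy, hy₂⟩) y' (rfl | ⟨hy', hy'₂⟩) h
    · rfl
    · exact absurd (h ▸ hy') (G.loopless.irrefl _)
    · exact absurd (h ▸ hy) (G.loopless.irrefl _)
    · exact Prod.ext h ((Bool.eq_not_of_ne hy₂.symm).trans (Bool.eq_not_of_ne hy'₂.symm).symm)
  · rintro w (rfl | hadj)
    exacts [⟨x, mem_insert _ _, rfl⟩,
      ⟨(w, !x.2), mem_insert_of_mem _ ⟨hadj, by simp⟩, rfl⟩]

theorem stmt_17 {V : Type*} (G : SimpleGraph V) {k : ℕ} (c : V → Fin k)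
    (hc : IsTotallySilver G c) :
    IsTotallySilver (doubleCover G) (fun p => c p.1) :=
  hc.comp Prod.fst (doubleCover_fst_bijOn_closedNeighborhood G)
end

section
/- Let n ≥ 1 and let G be the cubic graph obtained from a 3n-cycle x_1...x_{3n} and vertices z_1,...,z_n by partitioning {x_1,...,x_{3n}} into sets X_1,...,X_n of size 3 each, where no X_i contains two vertices x_j, x_k with j ≡ k (mod 3), and joining z_i to the three vertices of X_i. Then G is totally silver. -/
/-
On the cycle, the colours `j mod 3` of `x_{j-1}, x_j, x_{j+1}` are `0, 1, 2` in some order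
(the wrap-around respects residues because the cycle has length `3n`), and `x_j` sees exactly
one vertex of colour `3`, its hub, because the `X_i` partition the cycle. A hub `z_i` has colour
`3` and its neighbours `X_i` carry three distinct residues, hence exactly `0, 1, 2`.
-/

theorem Sum.existsUnique_of_existsUnique_inl {α β : Type*} {p : α ⊕ β → Prop}
    (hl : ∃! a, p (inl a)) (hr : ∀ b, ¬ p (inr b)) : ∃! w, p w := by
  obtain ⟨a, ha, huniq⟩ := hl
  refine ⟨inl a, ha, ?_⟩
  rintro (a' | b) h
  · exact congrArg inl (huniq a' h)
  · exact (hr b h).elim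

theorem Sum.existsUnique_of_existsUnique_inr {α β : Type*} {p : α ⊕ β → Prop}
    (hl : ∀ a, ¬ p (inl a)) (hr : ∃! b, p (inr b)) : ∃! w, p w := by
  obtain ⟨b, hb, huniq⟩ := hr
  refine ⟨inr b, hb, ?_⟩
  rintro (a | b') h
  · exact (hl a h).elim
  · exact congrArg inr (huniq b' h)

theorem Finset.existsUnique_of_injOn_of_card_le {α β : Type*} {s : Finset α} {t : Finset β}
    {f : α → β} (hf : Set.MapsTo f s t) (hinj : Set.InjOn f s) (hst : t.card ≤ s.card)
    {b : β} (hb : b ∈ t) : ∃! a, a ∈ s ∧ f a = b := by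
  obtain ⟨a, ha, rfl⟩ := surjOn_of_injOn_of_card_le f hf hinj hst hb
  exact ⟨a, ⟨ha, rfl⟩, fun a' ⟨ha', h⟩ => hinj ha' ha h⟩

namespace Fin

variable {m : ℕ} {u : Fin m}

theorem val_add_mod_three_of_val_eq_one (hm : 3 ∣ m) (hu : (u : ℕ) = 1) (j : Fin m) :
    ((j + u : Fin m) : ℕ) % 3 = ((j : ℕ) + 1) % 3 := by
  rw [val_add, hu, Nat.mod_mod_of_dvd _ hm]

theorem val_sub_mod_three_of_val_eq_one (hm : 3 ∣ m) (hu : (u : ℕ) = 1) (j : Fin m) :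
    ((j - u : Fin m) : ℕ) % 3 = ((j : ℕ) + 2) % 3 := by
  rw [sub_def, hu, Nat.mod_mod_of_dvd _ hm]
  omega

theorem existsUnique_val_mod_three (hm : 3 ∣ m) (hu : (u : ℕ) = 1) (j : Fin m) {r : ℕ}
    (hr : r < 3) : ∃! k : Fin m, (k = j ∨ k = j + u ∨ k = j - u) ∧ (k : ℕ) % 3 = r := by
  have hadd := val_add_mod_three_of_val_eq_one hm hu j
  have hsub := val_sub_mod_three_of_val_eq_one hm hu j
  refine existsUnique_of_exists_of_unique ?_ ?_
  · rcases (by omega : (j : ℕ) % 3 = r ∨ ((j : ℕ) + 1) % 3 = r ∨ ((j : ℕ) + 2) % 3 = r)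
      with h | h | h
    · exact ⟨j, Or.inl rfl, h⟩
    · exact ⟨j + u, Or.inr (Or.inl rfl), hadd.trans h⟩
    · exact ⟨j - u, Or.inr (Or.inr rfl), hsub.trans h⟩
  · rintro k₁ k₂ ⟨h₁ | h₁ | h₁, hr₁⟩ ⟨h₂ | h₂ | h₂, hr₂⟩ <;> subst h₁ h₂ <;>
      first | rfl | omega

end Fin

def cycleStep (n : ℕ) (hn : 1 ≤ n) : Fin (3 * n) :=
  ⟨1, lt_of_lt_of_le (by norm_num) (Nat.le_mul_of_pos_right 3 hn)⟩

/-- The cycle vertex `x_j` is `Sum.inl j` and the hub `z_i` is `Sum.inr i`. -/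
def cycleWithHubs (n : ℕ) (hn : 1 ≤ n) (X : Fin n → Finset (Fin (3 * n))) :
    SimpleGraph (Fin (3 * n) ⊕ Fin n) := SimpleGraph.fromRel (fun p q =>
  (∃ j : Fin (3 * n), p = Sum.inl j ∧ q = Sum.inl (j + cycleStep n hn)) ∨
  (∃ (i : Fin n) (j : Fin (3 * n)), p = Sum.inr i ∧ q = Sum.inl j ∧ j ∈ X i))

def silverColoring (n : ℕ) : Fin (3 * n) ⊕ Fin n → Fin 4 :=
  Sum.elim (fun j => ⟨(j : ℕ) % 3, by omega⟩) (fun _ => 3)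

theorem silverColoring_inl_eq_iff {n : ℕ} (j : Fin (3 * n)) (t : Fin 4) :
    silverColoring n (Sum.inl j) = t ↔ (j : ℕ) % 3 = t := Fin.ext_iff

@[simp]
theorem silverColoring_inr {n : ℕ} (i : Fin n) : silverColoring n (Sum.inr i) = 3 := rfl

theorem silverColoring_inl_ne_three {n : ℕ} (j : Fin (3 * n)) :
    silverColoring n (Sum.inl j) ≠ 3 := by
  rw [Ne, silverColoring_inl_eq_iff]
  omega

namespace cycleWithHubs

variable {n : ℕ} {hn : 1 ≤ n} {X : Fin n → Finset (Fin (3 * n))}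

theorem adj_inl_inl (j k : Fin (3 * n)) :
    (cycleWithHubs n hn X).Adj (Sum.inl j) (Sum.inl k) ↔
      k = j + cycleStep n hn ∨ k = j - cycleStep n hn := by
  have : NeZero (3 * n) := ⟨by omega⟩
  have hne : ∀ j : Fin (3 * n), j ≠ j + cycleStep n hn := fun j h => by
    simpa [Fin.ext_iff, cycleStep] using congrArg Fin.val (left_eq_add.mp h)
  simp only [cycleWithHubs, SimpleGraph.fromRel_adj, ne_eq, Sum.inl.injEq, reduceCtorEq,
    false_and, exists_false, or_false, exists_eq_left']
  rw [eq_sub_iff_add_eq, eq_comm (b := j)]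
  constructor
  · exact fun h => h.2
  · rintro (rfl | rfl)
    · exact ⟨hne j, Or.inl rfl⟩
    · exact ⟨fun h => hne _ h.symm, Or.inr rfl⟩

theorem adj_inl_inr (j : Fin (3 * n)) (i : Fin n) :
    (cycleWithHubs n hn X).Adj (Sum.inl j) (Sum.inr i) ↔ j ∈ X i := by
  simp [cycleWithHubs]

theorem adj_inr_inl (i : Fin n) (j : Fin (3 * n)) :
    (cycleWithHubs n hn X).Adj (Sum.inr i) (Sum.inl j) ↔ j ∈ X i := by
  simp [cycleWithHubs]

theorem not_adj_inr_inr (i i' : Fin n) :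
    ¬ (cycleWithHubs n hn X).Adj (Sum.inr i) (Sum.inr i') := by
  simp [cycleWithHubs]

theorem existsUnique_closedNbhd_inl (hpart : ∀ j : Fin (3 * n), ∃! i, j ∈ X i)
    (j : Fin (3 * n)) (t : Fin 4) :
    ∃! w, (w = Sum.inl j ∨ (cycleWithHubs n hn X).Adj (Sum.inl j) w) ∧
      silverColoring n w = t := by
  by_cases ht : (t : ℕ) < 3
  · refine Sum.existsUnique_of_existsUnique_inl ?_ ?_
    · simpa [adj_inl_inl, silverColoring_inl_eq_iff, or_assoc] using
        Fin.existsUnique_val_mod_three (by simp) rfl j ht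
    · rintro i ⟨-, rfl⟩
      simp at ht
  · have ht : t = 3 := by omega
    subst ht
    refine Sum.existsUnique_of_existsUnique_inr ?_ ?_
    · exact fun k h => silverColoring_inl_ne_three k h.2
    · simpa [adj_inl_inr] using hpart j

theorem existsUnique_closedNbhd_inr (hcardX : ∀ i, (X i).card = 3)
    (hmod : ∀ i, ∀ j ∈ X i, ∀ k ∈ X i, j ≠ k → (j : ℕ) % 3 ≠ (k : ℕ) % 3)
    (i : Fin n) (t : Fin 4) :
    ∃! w, (w = Sum.inr i ∨ (cycleWithHubs n hn X).Adj (Sum.inr i) w) ∧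
      silverColoring n w = t := by
  by_cases ht : (t : ℕ) < 3
  · refine Sum.existsUnique_of_existsUnique_inl ?_ ?_
    · have hinj : Set.InjOn (fun k : Fin (3 * n) => (k : ℕ) % 3) (X i) :=
        fun j hj k hk h => by_contra fun hjk => hmod i j hj k hk hjk h
      simpa [adj_inr_inl, silverColoring_inl_eq_iff] using
        Finset.existsUnique_of_injOn_of_card_le (t := Finset.range 3)
          (fun k _ => Finset.mem_range.mpr (Nat.mod_lt _ three_pos)) hinj (by simp [hcardX])
          (Finset.mem_range.mpr ht)
    · rintro i' ⟨-, rfl⟩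
      simp at ht
  · have ht : t = 3 := by omega
    subst ht
    refine Sum.existsUnique_of_existsUnique_inr ?_ ?_
    · exact fun k h => silverColoring_inl_ne_three k h.2
    · simp [not_adj_inr_inr]

end cycleWithHubs

theorem stmt_19 (n : ℕ) (hn : 1 ≤ n)
    (X : Fin n → Finset (Fin (3 * n)))
    (hcardX : ∀ i, (X i).card = 3)
    (hpart : ∀ j : Fin (3 * n), ∃! i, j ∈ X i)
    (hmod : ∀ i, ∀ j ∈ X i, ∀ k ∈ X i, j ≠ k → (j : ℕ) % 3 ≠ (k : ℕ) % 3) :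
    let G : SimpleGraph (Fin (3 * n) ⊕ Fin n) := SimpleGraph.fromRel (fun p q =>
      (∃ j : Fin (3 * n), p = Sum.inl j ∧ q = Sum.inl (j + (⟨1, by omega⟩ : Fin (3 * n)))) ∨
      (∃ (i : Fin n) (j : Fin (3 * n)), p = Sum.inr i ∧ q = Sum.inl j ∧ j ∈ X i))
    ∃ c : Fin (3 * n) ⊕ Fin n → Fin 4, IsTotallySilver G c := by
  show ∃ c, IsTotallySilver (cycleWithHubs n hn X) c
  refine ⟨silverColoring n, ?_⟩
  rintro (j | i) t
  · exact cycleWithHubs.existsUnique_closedNbhd_inl hpart j t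
  · exact cycleWithHubs.existsUnique_closedNbhd_inr hcardX hmod i t
end
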